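/- arXiv:2511.16644 — 2 statements merged into one kernel-verified Lean document; each statement's English description precedes it below -/
import Mathlib

section
/- Consider the domain Y = S ∩ [0,1/2]⁴ ⊂ ℝ⁴ where S is the standard simplex, with outer unit normals {±e₁,±e₂,±e₃,±e₄, e_s}, e_s = (1/2,1/2,1/2,1/2), and support values h_Y(−eᵢ)=0, h_Y(eᵢ)=1/2, h_Y(e_s)=1/2. Let a₁,a₂,a₃,a₄, b_s ≥ 0 and set bᵢ = aᵢ + b_s/2. Impose the constraint Σᵢ aᵢ + b_s = 2. Then the quantity A = 2a₁a₃ + 2a₂a₄ + 2b_s − b_s²/2 satisfies A ≤ 2, with equality if and only if either a₁ = a₃ = (2−b_s)/2 and a₂ = a₄ = 0, or a₂ = a₄ = (2−b_s)/2 and a₁ = a₃ = 0. -/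
/-- The constrained optimization from the computation of the EHZ capacity of
`Y = S ∩ [0,1/2]⁴`: with `aᵢ, b_s ≥ 0`, `bᵢ = aᵢ + b_s/2` and `Σ aᵢ + b_s = 2`,
the action term `A = 2a₁a₃ + 2a₂a₄ + 2b_s − b_s²/2` is at most `2`, with equality
exactly on the two branches. -/
theorem stmt_7 (a₁ a₂ a₃ a₄ bs : ℝ)
    (h₁ : 0 ≤ a₁) (h₂ : 0 ≤ a₂) (h₃ : 0 ≤ a₃) (h₄ : 0 ≤ a₄) (hbs : 0 ≤ bs)
    (b₁ b₂ b₃ b₄ : ℝ)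
    (hb₁ : b₁ = a₁ + bs / 2) (hb₂ : b₂ = a₂ + bs / 2)
    (hb₃ : b₃ = a₃ + bs / 2) (hb₄ : b₄ = a₄ + bs / 2)
    (hsum : a₁ + a₂ + a₃ + a₄ + bs = 2) :
    2 * a₁ * a₃ + 2 * a₂ * a₄ + 2 * bs - bs ^ 2 / 2 ≤ 2 ∧
    (2 * a₁ * a₃ + 2 * a₂ * a₄ + 2 * bs - bs ^ 2 / 2 = 2 ↔
      ((a₁ = (2 - bs) / 2 ∧ a₃ = (2 - bs) / 2 ∧ a₂ = 0 ∧ a₄ = 0) ∨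
       (a₂ = (2 - bs) / 2 ∧ a₄ = (2 - bs) / 2 ∧ a₁ = 0 ∧ a₃ = 0))) := by
  constructor
  · nlinarith [sq_nonneg (a₁-a₃), sq_nonneg (a₂-a₄), mul_nonneg (add_nonneg h₁ h₃) (add_nonneg h₂ h₄)]
  constructor
  · intro hA
    have hz : (a₁-a₃)^2 + (a₂-a₄)^2 + 2*((a₁+a₃)*(a₂+a₄)) = 0 := by
      linear_combination (-2)*hA + (a₁+a₂+a₃+a₄+2-bs)*hsum
    have n1 := sq_nonneg (a₁-a₃)
    have n2 := sq_nonneg (a₂-a₄)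
    have n3 := mul_nonneg (add_nonneg h₁ h₃) (add_nonneg h₂ h₄)
    have t1 : (a₁-a₃)^2 = 0 := by linarith
    have t2 : (a₂-a₄)^2 = 0 := by linarith
    have t3 : (a₁+a₃)*(a₂+a₄) = 0 := by linarith
    have e13 : a₁ = a₃ := by have := sq_eq_zero_iff.mp t1; linarith
    have e24 : a₂ = a₄ := by have := sq_eq_zero_iff.mp t2; linarith
    rcases mul_eq_zero.mp t3 with h | h
    · exact Or.inr ⟨by linarith, by linarith, by linarith, by linarith⟩
    · exact Or.inl ⟨by linarith, by linarith, by linarith, by linarith⟩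
  · rintro (⟨e1, e3, e2, e4⟩ | ⟨e2, e4, e1, e3⟩) <;> subst e1 e2 e3 e4 <;> ring
end

section
/- Let K ⊂ ℝ^{2n} be a convex polytope with defining halfspaces {x : ⟨x, nᵢ⟩ ≤ h_K(nᵢ)}, i = 1,…,k. Suppose γ : [t₀, t₀+δ) → ∂K is absolutely continuous with γ'(s) ∈ J N_K(γ(t₀)) for a.e. s, and γ'(t₀) = Σ_{j=1}^m aⱼ J n_{iⱼ} with all aⱼ > 0 and γ'(t₀) ∈ T_K(γ(t₀)). Define ψ(s) = Σⱼ aⱼ (h_K(n_{iⱼ}) − ⟨n_{iⱼ}, γ(s)⟩). Then ψ is nonincreasing, nonnegative, and ψ(t₀) = 0; consequently γ(s) lies in the face E = ∂K ∩ {x : ⟨x, n_{iⱼ}⟩ = h_K(n_{iⱼ}), j = 1,…,m} for all s ∈ [t₀, t₀+δ). -/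
open scoped InnerProductSpace
open MeasureTheory Set Filter intervalIntegral

noncomputable section

/-- The phase space `ℝ^{2n}`, written as pairs of `q` and `p` blocks. -/
abbrev Esp (n : ℕ) := EuclideanSpace ℝ (Fin n ⊕ Fin n)

/-- The standard complex structure `J` on `ℝ^{2n}`: `J(p,q) = (-q,p)`. -/
def Jmap {n : ℕ} (x : Esp n) : Esp n :=
  WithLp.toLp 2 (fun i => Sum.elim (fun k => -x (Sum.inr k)) (fun k => x (Sum.inl k)) i)

/-- Support function of a set `K`. -/
def sF {V : Type*} [NormedAddCommGroup V] [InnerProductSpace ℝ V] (K : Set V) (v : V) : ℝ :=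
  sSup ((fun x => ⟪x, v⟫_ℝ) '' K)

/-- Normal cone of `K` at `x`. -/
def nC {V : Type*} [NormedAddCommGroup V] [InnerProductSpace ℝ V] (K : Set V) (x : V) : Set V :=
  {v | ∀ y ∈ K, 0 ≤ ⟪v, x - y⟫_ℝ}

/-- Tangent cone of `K` at `x` (polar of the normal cone). -/
def tC {V : Type*} [NormedAddCommGroup V] [InnerProductSpace ℝ V] (K : Set V) (x : V) : Set V :=
  {v | ∀ u ∈ nC K x, ⟪v, u⟫_ℝ ≤ 0}

/-- The standard symplectic form `ω(u,v) = ⟨Ju, v⟩` on `ℝ^{2n}`. -/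
def symp {n : ℕ} (u v : Esp n) : ℝ := ⟪Jmap u, v⟫_ℝ

lemma inner_Jmap_right' {n : ℕ} (x y : Esp n) : ⟪x, Jmap y⟫_ℝ = -⟪Jmap x, y⟫_ℝ := by
  simp only [Jmap, PiLp.inner_apply, RCLike.inner_apply, conj_trivial, PiLp.toLp_apply]
  rw [Fintype.sum_sum_type, Fintype.sum_sum_type]
  simp [mul_comm]

lemma Esp_sum_apply' {n m : ℕ} (a : Fin m → ℝ) (v : Fin m → Esp n) (i : Fin n ⊕ Fin n) :
    (∑ j, a j • v j) i = ∑ j, a j • (v j i) := by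
  simp [WithLp.ofLp_sum]

lemma Jmap_sum' {n m : ℕ} (a : Fin m → ℝ) (v : Fin m → Esp n) :
    Jmap (∑ j, a j • v j) = ∑ j, a j • Jmap (v j) := by
  ext i
  cases i with
  | inl i => simp [Jmap, Esp_sum_apply', mul_neg, Finset.sum_neg_distrib]
  | inr i => simp [Jmap, Esp_sum_apply']

/-- On a convex polytope, if `γ` moves with velocities in `J N_K(γ(t₀))` and
`γ'(t₀) = Σ aⱼ J n_{iⱼ}` with `aⱼ > 0` is a tangent vector, then
`ψ(s) = Σ aⱼ (h_K(n_{iⱼ}) − ⟨n_{iⱼ}, γ(s)⟩)` is nonincreasing, nonnegative, vanishes at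
`t₀`, and hence `γ` stays in the face `E` on `[t₀, t₀+δ)`. -/
theorem stmt_13 (n k : ℕ) (nv : Fin k → Esp n) (h : Fin k → ℝ)
    (K : Set (Esp n)) (hKdef : K = ⋂ i, {x | ⟪x, nv i⟫_ℝ ≤ h i})
    (hKcomp : IsCompact K) (hKint : (interior K).Nonempty)
    (hsupp : ∀ i, sF K (nv i) = h i)
    (t₀ δ : ℝ) (hδ : 0 < δ)
    (γ γ' : ℝ → Esp n)
    (hAC : ∀ s ∈ Ico t₀ (t₀ + δ), γ s = γ t₀ + ∫ r in t₀..s, γ' r)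
    (hbdry : ∀ s ∈ Ico t₀ (t₀ + δ), γ s ∈ frontier K)
    (hvel : ∀ᵐ s ∂(volume.restrict (Ico t₀ (t₀ + δ))), γ' s ∈ Jmap '' nC K (γ t₀))
    (m : ℕ) (idx : Fin m → Fin k) (a : Fin m → ℝ) (ha : ∀ j, 0 < a j)
    (hactive : ∀ j, nv (idx j) ∈ nC K (γ t₀))
    (hv0 : γ' t₀ = ∑ j, a j • Jmap (nv (idx j)))
    (htan : γ' t₀ ∈ tC K (γ t₀)) :
    AntitoneOn (fun s => ∑ j, a j * (h (idx j) - ⟪nv (idx j), γ s⟫_ℝ)) (Ico t₀ (t₀ + δ)) ∧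
    (∀ s ∈ Ico t₀ (t₀ + δ), 0 ≤ ∑ j, a j * (h (idx j) - ⟪nv (idx j), γ s⟫_ℝ)) ∧
    (∑ j, a j * (h (idx j) - ⟪nv (idx j), γ t₀⟫_ℝ)) = 0 ∧
    (∀ s ∈ Ico t₀ (t₀ + δ),
      γ s ∈ frontier K ∩ ⋂ j, {x | ⟪x, nv (idx j)⟫_ℝ = h (idx j)}) := by

  have hKclosed : IsClosed K := hKcomp.isClosed
  have hKmem : ∀ s ∈ Ico t₀ (t₀ + δ), γ s ∈ K := fun s hs => by
    have := hbdry s hs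
    exact hKclosed.frontier_subset this
  have ht₀ : t₀ ∈ Ico t₀ (t₀ + δ) := ⟨le_refl _, by linarith⟩
  have hK_le : ∀ x ∈ K, ∀ i, ⟪x, nv i⟫_ℝ ≤ h i := by
    intro x hx i
    rw [hKdef] at hx
    exact mem_iInter.mp hx i
  have hKne : K.Nonempty := hKint.mono interior_subset
  have heq0 : ∀ j, ⟪nv (idx j), γ t₀⟫_ℝ = h (idx j) := by
    intro j
    have h1 : ⟪γ t₀, nv (idx j)⟫_ℝ ≤ h (idx j) := hK_le _ (hKmem t₀ ht₀) _
    have h2 : h (idx j) ≤ ⟪γ t₀, nv (idx j)⟫_ℝ := by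
      rw [← hsupp (idx j)]
      apply csSup_le (hKne.image _)
      rintro r ⟨y, hy, rfl⟩
      show ⟪y, nv (idx j)⟫_ℝ ≤ ⟪γ t₀, nv (idx j)⟫_ℝ
      have h3 := hactive j y hy
      rw [inner_sub_right] at h3
      rw [real_inner_comm]
      have h4 := real_inner_comm (γ t₀) (nv (idx j))
      linarith
    rw [real_inner_comm]
    linarith
  -- the key claim: ψ vanishes identically
  have hψ0 : ∀ s ∈ Ico t₀ (t₀ + δ),
      (∑ j, a j * (h (idx j) - ⟪nv (idx j), γ s⟫_ℝ)) = 0 := by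
    intro s hs
    have hnonneg : 0 ≤ ∑ j, a j * (h (idx j) - ⟪nv (idx j), γ s⟫_ℝ) := by
      apply Finset.sum_nonneg
      intro j _
      have h1 := hK_le _ (hKmem s hs) (idx j)
      rw [real_inner_comm] at h1
      exact mul_nonneg (ha j).le (by linarith)
    refine le_antisymm ?_ hnonneg
    set w : Esp n := ∑ j, a j • nv (idx j) with hw
    have hsum_eq : ∀ v : Esp n, (∑ j, a j * ⟪nv (idx j), v⟫_ℝ) = ⟪w, v⟫_ℝ := by
      intro v
      rw [hw, sum_inner]
      refine Finset.sum_congr rfl fun j _ => ?_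
      rw [real_inner_smul_left]
    have hψ_eq : (∑ j, a j * (h (idx j) - ⟪nv (idx j), γ s⟫_ℝ))
        = -⟪w, γ s - γ t₀⟫_ℝ := by
      rw [inner_sub_right, ← hsum_eq, ← hsum_eq]
      rw [← Finset.sum_sub_distrib, ← Finset.sum_neg_distrib]
      apply Finset.sum_congr rfl
      intro j _
      rw [heq0 j]
      ring
    have hJw : Jmap w = γ' t₀ := by
      rw [hw, Jmap_sum', hv0]
    have hae : ∀ᵐ r ∂(volume.restrict (Ico t₀ (t₀ + δ))), 0 ≤ ⟪w, γ' r⟫_ℝ := by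
      filter_upwards [hvel] with r hr
      obtain ⟨u, hu, hru⟩ := hr
      rw [← hru, inner_Jmap_right', hJw]
      have := htan u hu
      linarith
    by_cases hInt : IntervalIntegrable γ' volume t₀ s
    · have hle : t₀ ≤ s := hs.1
      have hγs : γ s - γ t₀ = ∫ r in Ioc t₀ s, γ' r := by
        rw [hAC s hs, intervalIntegral.integral_of_le hle]
        abel
      have hI : IntegrableOn γ' (Ioc t₀ s) volume := hInt.1
      have hinner : ⟪w, γ s - γ t₀⟫_ℝ = ∫ r in Ioc t₀ s, ⟪w, γ' r⟫_ℝ := by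
        rw [hγs, integral_inner hI]
      have hsub : Ioc t₀ s ⊆ Ico t₀ (t₀ + δ) := fun r hr =>
        ⟨hr.1.le, lt_of_le_of_lt hr.2 hs.2⟩
      have hae' : ∀ᵐ r ∂(volume.restrict (Ioc t₀ s)), 0 ≤ ⟪w, γ' r⟫_ℝ :=
        ae_restrict_of_ae_restrict_of_subset hsub hae
      have hnn : 0 ≤ ∫ r in Ioc t₀ s, ⟪w, γ' r⟫_ℝ := integral_nonneg_of_ae hae'
      rw [hψ_eq, hinner]
      linarith
    · rw [hψ_eq, hAC s hs, intervalIntegral.integral_undef hInt]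
      simp
  refine ⟨?_, ?_, hψ0 t₀ ht₀, ?_⟩
  · intro s1 h1 s2 h2 _
    simp only [hψ0 s1 h1, hψ0 s2 h2, le_refl]
  · intro s hs
    simp only [hψ0 s hs, le_refl]
  · intro s hs
    refine ⟨hbdry s hs, ?_⟩
    rw [mem_iInter]
    intro j
    have hz := hψ0 s hs
    have hterm : ∀ j ∈ Finset.univ, 0 ≤ a j * (h (idx j) - ⟪nv (idx j), γ s⟫_ℝ) := by
      intro j _
      have h1 := hK_le _ (hKmem s hs) (idx j)
      rw [real_inner_comm] at h1
      exact mul_nonneg (ha j).le (by linarith)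
    have := (Finset.sum_eq_zero_iff_of_nonneg hterm).mp hz j (Finset.mem_univ j)
    have hne : a j ≠ 0 := (ha j).ne'
    have h5 : h (idx j) - ⟪nv (idx j), γ s⟫_ℝ = 0 := by
      rcases mul_eq_zero.mp this with h' | h'
      · exact absurd h' hne
      · exact h'
    show ⟪γ s, nv (idx j)⟫_ℝ = h (idx j)
    rw [real_inner_comm]
    linarith
end
end
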